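/- arXiv:2503.20717 — 2 statements merged into one kernel-verified Lean document; each statement's English description precedes it below -/
import Mathlib

section
/- Fix integers w ≥ 2, h ≥ 1, d ≥ 2. Let A_{w,h} be the h(w−1) × wh matrix over 𝔽₂ whose columns are indexed by Fin h × Fin w and whose row (r,c) (r ∈ Fin h, c ∈ Fin (w−1)) equals e_{(r,c)} + e_{(r,c+1)}, and let R_d be the (d−1) × d repetition check matrix over 𝔽₂. Form the hypergraph product check matrices H_X = [A_{w,h} ⊗ I_d | I_{h(w−1)} ⊗ R_dᵀ] and H_Z = [I_{wh} ⊗ R_d | A_{w,h}ᵀ ⊗ I_{d−1}]. Then the number of logical qubits of the resulting CSS code equals h: (whd + h(w−1)(d−1)) − rank(H_X) − rank(H_Z) = h. -/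
open Matrix
open scoped Kronecker

/-- The X-type check matrix of the hypergraph product code:
`H_X = [H1 ⊗ I_{n2} | I_{r1} ⊗ H2ᵀ]`. -/
def hgpX {R1 N1 R2 N2 : Type*} [DecidableEq R1] [DecidableEq N2]
    (H1 : Matrix R1 N1 (ZMod 2)) (H2 : Matrix R2 N2 (ZMod 2)) :
    Matrix (R1 × N2) ((N1 × N2) ⊕ (R1 × R2)) (ZMod 2) :=
  Matrix.fromCols (H1 ⊗ₖ (1 : Matrix N2 N2 (ZMod 2)))
    ((1 : Matrix R1 R1 (ZMod 2)) ⊗ₖ H2ᵀ)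

/-- The Z-type check matrix of the hypergraph product code:
`H_Z = [I_{n1} ⊗ H2 | H1ᵀ ⊗ I_{r2}]`. -/
def hgpZ {R1 N1 R2 N2 : Type*} [DecidableEq N1] [DecidableEq R2]
    (H1 : Matrix R1 N1 (ZMod 2)) (H2 : Matrix R2 N2 (ZMod 2)) :
    Matrix (N1 × R2) ((N1 × N2) ⊕ (R1 × R2)) (ZMod 2) :=
  Matrix.fromCols ((1 : Matrix N1 N1 (ZMod 2)) ⊗ₖ H2)
    (H1ᵀ ⊗ₖ (1 : Matrix R2 R2 (ZMod 2)))

/-- The (d−1) × d check matrix of the [d,1,d] repetition code over 𝔽₂: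
its `i`-th row is `e_i + e_{i+1}`. -/
def repMat (d : ℕ) : Matrix (Fin (d - 1)) (Fin d) (ZMod 2) :=
  Matrix.of fun i j => if (j : ℕ) = (i : ℕ) ∨ (j : ℕ) = (i : ℕ) + 1 then 1 else 0

/-- The check matrix of the "ab" pattern translated over a `w × h` grid: columns are indexed
by `Fin h × Fin w`, and the row indexed by `(r, c)` with `r : Fin h`, `c : Fin (w-1)` is
`e_{(r,c)} + e_{(r,c+1)}`. -/
def abMat (w h : ℕ) : Matrix (Fin h × Fin (w - 1)) (Fin h × Fin w) (ZMod 2) :=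
  Matrix.of fun rc xy =>
    if xy.1 = rc.1 ∧ ((xy.2 : ℕ) = (rc.2 : ℕ) ∨ (xy.2 : ℕ) = (rc.2 : ℕ) + 1) then 1 else 0

/-! Both check matrices have full row rank: `R_d` has the right inverse `[i ≤ j]`, hence so does
`abMat w h = I_h ⊗ R_w`, and a right inverse `G` of `H1` (resp. `H2`) gives the right inverse
`[G ⊗ I; 0]` of `H_X` (resp. `[I ⊗ G; 0]` of `H_Z`). The count of logical qubits is then
`n₁n₂ + r₁r₂ − r₁n₂ − n₁r₂ = (n₁ − r₁)(n₂ − r₂) = h · 1`. -/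

theorem Matrix.rank_eq_card_height_of_mul_eq_one {m n R : Type*} [Fintype m] [Fintype n]
    [DecidableEq m] [CommSemiring R] [StrongRankCondition R]
    {M : Matrix m n R} {N : Matrix n m R} (hMN : M * N = 1) :
    M.rank = Fintype.card m :=
  le_antisymm M.rank_le_card_height <| calc
    Fintype.card m = (M * N).rank := by rw [hMN, rank_one]
    _ ≤ M.rank := rank_mul_le_left M N

theorem Matrix.card_height_le_card_width_of_mul_eq_one {m n R : Type*} [Fintype m] [Fintype n]
    [DecidableEq m] [CommSemiring R] [StrongRankCondition R]
    {M : Matrix m n R} {N : Matrix n m R} (hMN : M * N = 1) :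
    Fintype.card m ≤ Fintype.card n :=
  rank_eq_card_height_of_mul_eq_one hMN ▸ M.rank_le_card_width

theorem Nat.mul_add_mul_sub_mul_sub_mul {n1 r1 n2 r2 : ℕ} (h1 : r1 ≤ n1) (h2 : r2 ≤ n2) :
    n1 * n2 + r1 * r2 - r1 * n2 - n1 * r2 = (n1 - r1) * (n2 - r2) := by
  obtain ⟨k1, rfl⟩ := Nat.exists_eq_add_of_le h1
  obtain ⟨k2, rfl⟩ := Nat.exists_eq_add_of_le h2
  rw [Nat.sub_sub, Nat.add_sub_cancel_left (n := r1), Nat.add_sub_cancel_left (n := r2)]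
  exact Nat.sub_eq_of_eq_add (by ring)

section HypergraphProduct

variable {R1 N1 R2 N2 : Type*} [Fintype R1] [Fintype N1] [Fintype R2] [Fintype N2]
  {H1 : Matrix R1 N1 (ZMod 2)} {H2 : Matrix R2 N2 (ZMod 2)}

theorem rank_hgpX_of_mul_eq_one [DecidableEq R1] [DecidableEq N2] {G1 : Matrix N1 R1 (ZMod 2)}
    (hG1 : H1 * G1 = 1) :
    (hgpX H1 H2).rank = Fintype.card R1 * Fintype.card N2 := by
  have hX : hgpX H1 H2 * fromRows (G1 ⊗ₖ (1 : Matrix N2 N2 (ZMod 2)))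
      (0 : Matrix (R1 × R2) (R1 × N2) (ZMod 2)) = 1 := by
    rw [hgpX, fromCols_mul_fromRows, ← mul_kronecker_mul, hG1, Matrix.mul_one, Matrix.mul_zero,
      add_zero, one_kronecker_one]
  rw [rank_eq_card_height_of_mul_eq_one hX, Fintype.card_prod]

theorem rank_hgpZ_of_mul_eq_one [DecidableEq N1] [DecidableEq R2] {G2 : Matrix N2 R2 (ZMod 2)}
    (hG2 : H2 * G2 = 1) :
    (hgpZ H1 H2).rank = Fintype.card N1 * Fintype.card R2 := by
  have hZ : hgpZ H1 H2 * fromRows ((1 : Matrix N1 N1 (ZMod 2)) ⊗ₖ G2)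
      (0 : Matrix (R1 × R2) (N1 × R2) (ZMod 2)) = 1 := by
    rw [hgpZ, fromCols_mul_fromRows, ← mul_kronecker_mul, hG2, Matrix.mul_one, Matrix.mul_zero,
      add_zero, one_kronecker_one]
  rw [rank_eq_card_height_of_mul_eq_one hZ, Fintype.card_prod]

theorem card_sub_rank_hgpX_sub_rank_hgpZ [DecidableEq R1] [DecidableEq N1] [DecidableEq R2]
    [DecidableEq N2] {G1 : Matrix N1 R1 (ZMod 2)} {G2 : Matrix N2 R2 (ZMod 2)}
    (hG1 : H1 * G1 = 1) (hG2 : H2 * G2 = 1) :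
    Fintype.card (N1 × N2 ⊕ R1 × R2) - (hgpX H1 H2).rank - (hgpZ H1 H2).rank =
      (Fintype.card N1 - Fintype.card R1) * (Fintype.card N2 - Fintype.card R2) := by
  rw [rank_hgpX_of_mul_eq_one hG1, rank_hgpZ_of_mul_eq_one hG2, Fintype.card_sum,
    Fintype.card_prod, Fintype.card_prod]
  exact Nat.mul_add_mul_sub_mul_sub_mul (card_height_le_card_width_of_mul_eq_one hG1)
    (card_height_le_card_width_of_mul_eq_one hG2)

end HypergraphProduct

def repInv (d : ℕ) : Matrix (Fin d) (Fin (d - 1)) (ZMod 2) :=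
  of fun i j => if (i : ℕ) ≤ (j : ℕ) then 1 else 0

-- Entry `(i, j)` of the product is `[i ≤ j] + [i + 1 ≤ j] = [i = j]`.
theorem repMat_mul_repInv (d : ℕ) : repMat d * repInv d = 1 := by
  ext i j
  have hi : (i : ℕ) + 1 < d := by omega
  have hpair : (Finset.range d).filter (fun k : ℕ => k = i ∨ k = i + 1) =
      {(i : ℕ), (i : ℕ) + 1} := by
    ext k
    simp only [Finset.mem_filter, Finset.mem_range, Finset.mem_insert, Finset.mem_singleton]
    omega
  simp only [mul_apply, repMat, repInv, of_apply, ite_mul, one_mul, zero_mul]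
  rw [Fin.sum_univ_eq_sum_range (fun k : ℕ => if k = i ∨ k = i + 1 then
    (if k ≤ (j : ℕ) then (1 : ZMod 2) else 0) else 0), ← Finset.sum_filter, hpair,
    Finset.sum_pair (by omega), one_apply]
  split_ifs <;> first | rfl | omega

theorem abMat_eq_one_kronecker_repMat (w h : ℕ) :
    abMat w h = (1 : Matrix (Fin h) (Fin h) (ZMod 2)) ⊗ₖ repMat w := by
  ext ⟨r, c⟩ ⟨x, y⟩
  simp only [abMat, repMat, of_apply, kroneckerMap_apply, one_apply]
  split_ifs <;> simp_all [eq_comm]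

theorem ab_rep_hgp_logical_qubits_general (w h d : ℕ) (hw : 2 ≤ w) (hd : 2 ≤ d) :
    (w * h * d + h * (w - 1) * (d - 1)) -
        (hgpX (abMat w h) (repMat d)).rank - (hgpZ (abMat w h) (repMat d)).rank = h := by
  have hA : abMat w h * ((1 : Matrix (Fin h) (Fin h) (ZMod 2)) ⊗ₖ repInv w) = 1 := by
    rw [abMat_eq_one_kronecker_repMat, ← mul_kronecker_mul, Matrix.one_mul, repMat_mul_repInv,
      one_kronecker_one]
  have hk := card_sub_rank_hgpX_sub_rank_hgpZ hA (repMat_mul_repInv d)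
  simp only [Fintype.card_sum, Fintype.card_prod, Fintype.card_fin] at hk
  obtain ⟨a, rfl⟩ := Nat.exists_eq_add_of_le' (show 1 ≤ w by omega)
  obtain ⟨b, rfl⟩ := Nat.exists_eq_add_of_le' (show 1 ≤ d by omega)
  rw [show (a + 1) * h * (b + 1) = h * (a + 1) * (b + 1) by ring, hk]
  simp only [Nat.add_sub_cancel, mul_add_one, Nat.add_sub_cancel_left, mul_one]

/-- The hypergraph product of the "ab"-pattern code `abMat w h` with the repetition code
`R_d` encodes exactly `h` logical qubits:
`(whd + h(w−1)(d−1)) − rank(H_X) − rank(H_Z) = h`. -/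
theorem ab_rep_hgp_logical_qubits (w h d : ℕ) (hw : 2 ≤ w) (hh : 1 ≤ h) (hd : 2 ≤ d) :
    (w * h * d + h * (w - 1) * (d - 1)) -
        (hgpX (abMat w h) (repMat d)).rank - (hgpZ (abMat w h) (repMat d)).rank = h :=
  ab_rep_hgp_logical_qubits_general w h d hw hd
end

section
/- Fix integers w ≥ 2, h ≥ 1, d ≥ 2. Let A_{w,h} be the h(w−1) × wh matrix over 𝔽₂ whose columns are indexed by Fin h × Fin w and whose row (r,c) (r ∈ Fin h, c ∈ Fin (w−1)) equals e_{(r,c)} + e_{(r,c+1)}, and let R_d be the (d−1) × d repetition check matrix over 𝔽₂. Form the hypergraph product check matrices H_X = [A_{w,h} ⊗ I_d | I_{h(w−1)} ⊗ R_dᵀ] and H_Z = [I_{wh} ⊗ R_d | A_{w,h}ᵀ ⊗ I_{d−1}]. Then the CSS code distance min(d_X, d_Z) of this code equals min(w, d), where d_Z is the minimum Hamming weight of a vector v with H_X · v = 0 that does not lie in the row space of H_Z, and d_X is the minimum Hamming weight of a vector v with H_Z · v = 0 that does not lie in the row space of H_X. -/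
open Matrix
open scoped Kronecker

/-- The Hamming weight of a vector over 𝔽₂: its number of nonzero entries. -/
def wt {ι : Type*} [Fintype ι] (v : ι → ZMod 2) : ℕ :=
  (Finset.univ.filter fun i => v i ≠ 0).card

/-!
Write a vector of the hypergraph product as `(vec X₁, vec X₂)` (Mathlib's `vec X` is indexed by
column, then row, so `X₁ : Matrix N₂ N₁`). Then `H_Z v = 0` reads `H₂ X₁ = X₂ H₁`, and the row
space of `H_X` consists of the pairs `(U H₁, H₂ U)`. If `X₁ c = 0` for every `c ∈ ker H₁`, the rows
of `X₁` lie in `(ker H₁)^⊥ = rowspace H₁`, so `X₁ = U H₁`, and then `X₂ = H₂ U` because `H₁` has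
full row rank: `v` is in the row space of `H_X`. Otherwise `X₁ c` is a nonzero codeword of
`ker H₂`, of weight at most that of `X₁`. Conversely `e_{n₁} ⊗ c₂`, with `c₂ ∈ ker H₂` of minimum
weight, pairs to `c₁ n₁ * c₂ n₂ ≠ 0` with the vector `c₁ ⊗ e_{n₂}` of `ker H_X`, so it is not in
the row space of `H_X`. Hence `d_X = d(ker H₂)` and, transposing everything, `d_Z = d(ker H₁)`.
Here `H₁ = I_h ⊗ R_w` and `H₂ = R_d` have full row rank, and `ker R_n = {0, 𝟙}` has distance `n`.
-/

namespace Matrix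

variable {K ι κ μ ν : Type*} [Field K] [Fintype κ]

theorem exists_vecMul_eq_of_forall_dotProduct_eq_zero [Fintype ι] {H : Matrix κ ι K}
    {x : ι → K} (hx : ∀ c, H *ᵥ c = 0 → x ⬝ᵥ c = 0) : ∃ y, y ᵥ* H = x := by
  classical
  have hmem : dotProductEquiv K ι x ∈ (LinearMap.ker H.mulVecLin).dualAnnihilator :=
    (Submodule.mem_dualAnnihilator _).2 fun c hc => hx c hc
  rw [← LinearMap.range_dualMap_eq_dualAnnihilator_ker] at hmem
  obtain ⟨φ, hφ⟩ := hmem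
  refine ⟨(dotProductEquiv K κ).symm φ,
    (dotProductEquiv K ι).injective (LinearMap.ext fun c => ?_)⟩
  have hφc := LinearMap.congr_fun hφ c
  simp only [LinearMap.dualMap_apply, Matrix.mulVecLin_apply] at hφc
  rw [← hφc, dotProductEquiv_apply_apply, ← dotProduct_mulVec]
  exact LinearMap.congr_fun ((dotProductEquiv K κ).apply_symm_apply φ) (H *ᵥ c)

theorem exists_eq_mul_of_forall_mulVec_eq_zero [Fintype ι] {H : Matrix κ ι K}
    {X : Matrix μ ι K} (hX : ∀ c, H *ᵥ c = 0 → X *ᵥ c = 0) : ∃ U : Matrix μ κ K, X = U * H := by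
  choose U hU using fun i => exists_vecMul_eq_of_forall_dotProduct_eq_zero
    (H := H) (x := X i) fun c hc => congrFun (hX c hc) i
  exact ⟨U, funext fun i => (hU i).symm⟩

theorem eq_of_mul_eq_mul_of_vecMul_injective {H : Matrix κ ι K}
    (hH : Function.Injective H.vecMul) {A B : Matrix μ κ K} (h : A * H = B * H) : A = B :=
  funext fun i => hH (congrFun h i)

theorem exists_eq_mul_or_exists_mulVec_ne_zero [Fintype ι] [Fintype ν] {H₁ : Matrix κ ι K}
    {H₂ : Matrix μ ν K} {X₁ : Matrix ν ι K} {X₂ : Matrix μ κ K}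
    (hH₁ : Function.Injective H₁.vecMul) (hX : H₂ * X₁ = X₂ * H₁) :
    (∃ U : Matrix ν κ K, X₁ = U * H₁ ∧ X₂ = H₂ * U) ∨ ∃ c, H₁ *ᵥ c = 0 ∧ X₁ *ᵥ c ≠ 0 := by
  by_cases h : ∀ c, H₁ *ᵥ c = 0 → X₁ *ᵥ c = 0
  · obtain ⟨U, rfl⟩ := exists_eq_mul_of_forall_mulVec_eq_zero h
    refine .inl ⟨U, rfl, eq_of_mul_eq_mul_of_vecMul_injective hH₁ ?_⟩
    rw [Matrix.mul_assoc, hX]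
  · push Not at h
    exact .inr h

theorem one_kronecker_vecMul_injective [Fintype μ] [DecidableEq μ] {H : Matrix κ ι K}
    (hH : Function.Injective H.vecMul) :
    Function.Injective (1 ⊗ₖ H : Matrix (μ × κ) (μ × ι) K).vecMul := by
  intro y₁ y₂ h
  obtain ⟨Y₁, rfl⟩ := vec_bijective.2 y₁
  obtain ⟨Y₂, rfl⟩ := vec_bijective.2 y₂
  simp only [vec_vecMul_kronecker, Matrix.mul_one, vec_inj] at h
  have hT : Y₁ᵀ * H = Y₂ᵀ * H := by
    simpa only [transpose_mul, transpose_transpose] using congrArg transpose h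
  rw [transpose_injective (eq_of_mul_eq_mul_of_vecMul_injective hH hT)]

theorem eq_of_add_eq_zero_of_charTwo {R : Type*} [Ring R] [CharP R 2] {A B : Matrix μ ν R}
    (h : A + B = 0) : A = B :=
  funext₂ fun i j => CharTwo.add_eq_zero.1 (congrFun₂ h i j)

theorem notMem_range_vecMulLinear_of_dotProduct_ne_zero {R : Type*} [CommSemiring R]
    [Fintype ι] {M : Matrix κ ι R} {x z : ι → R} (hz : M *ᵥ z = 0) (hxz : x ⬝ᵥ z ≠ 0) :
    x ∉ LinearMap.range M.vecMulLinear := by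
  rintro ⟨u, rfl⟩
  exact hxz (by rw [vecMulLinear_apply, ← dotProduct_mulVec, hz, dotProduct_zero])

theorem vec_vecMulVec_dotProduct_vec_vecMulVec {R : Type*} [CommSemiring R] [Fintype ι]
    (a c : κ → R) (b d : ι → R) :
    vec (vecMulVec a b) ⬝ᵥ vec (vecMulVec c d) = (a ⬝ᵥ c) * (b ⬝ᵥ d) := by
  simp only [dotProduct, vec, vecMulVec_apply, Fintype.sum_prod_type, Finset.sum_mul_sum]
  rw [Finset.sum_comm]
  exact Finset.sum_congr rfl fun _ _ => Finset.sum_congr rfl fun _ _ => by ring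

end Matrix

section Weight

variable {ι κ : Type*} [Fintype ι] [Fintype κ]

theorem wt_eq_zero_iff {v : ι → ZMod 2} : wt v = 0 ↔ v = 0 :=
  hammingNorm_eq_zero

theorem wt_zero : wt (0 : ι → ZMod 2) = 0 :=
  wt_eq_zero_iff.2 rfl

theorem wt_eq_card {v : ι → ZMod 2} (hv : ∀ i, v i ≠ 0) : wt v = Fintype.card ι := by
  simp [wt, hv]

theorem wt_single [DecidableEq ι] (i : ι) : wt (Pi.single i (1 : ZMod 2)) = 1 := by
  rw [wt, Finset.card_eq_one]
  exact ⟨i, by ext j; by_cases h : j = i <;> simp [h]⟩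

theorem wt_comp_le {f : κ → ι} (hf : Function.Injective f) (v : ι → ZMod 2) :
    wt (v ∘ f) ≤ wt v :=
  Finset.card_le_card_of_injOn f (fun i hi => by simpa using hi) hf.injOn

theorem wt_sumElim (f : ι → ZMod 2) (g : κ → ZMod 2) : wt (Sum.elim f g) = wt f + wt g := by
  simp only [wt, Finset.card_filter, Fintype.sum_sum_type, Sum.elim_inl, Sum.elim_inr]
  -- the two sides differ only in their `Decidable` instances
  rfl

theorem wt_vec_vecMulVec (b : κ → ZMod 2) (a : ι → ZMod 2) :
    wt (vec (vecMulVec b a)) = wt a * wt b := by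
  rw [wt, wt, wt, ← Finset.card_product, ← Finset.filter_product, Finset.univ_product_univ]
  congr 1
  ext ⟨i, j⟩
  simp [vec, vecMulVec_apply, and_comm]

theorem wt_mulVec_le_wt_vec (X : Matrix κ ι (ZMod 2)) (c : ι → ZMod 2) :
    wt (X *ᵥ c) ≤ wt (vec X) := by
  classical
  calc wt (X *ᵥ c)
      ≤ ((Finset.univ.filter fun p : ι × κ => vec X p ≠ 0).image Prod.snd).card := by
        refine Finset.card_le_card fun i hi => ?_
        obtain ⟨j, -, hj⟩ := Finset.exists_ne_zero_of_sum_ne_zero (Finset.mem_filter.1 hi).2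
        exact Finset.mem_image.2
          ⟨(j, i), Finset.mem_filter.2 ⟨Finset.mem_univ _, left_ne_zero_of_mul hj⟩, rfl⟩
    _ ≤ wt (vec X) := Finset.card_image_le

end Weight

/-- The distance of the classical code `ker H` (`0` if `ker H = 0`). -/
noncomputable def minDist {ρ ι : Type*} [Fintype ι] (H : Matrix ρ ι (ZMod 2)) : ℕ :=
  sInf {m | ∃ c, H *ᵥ c = 0 ∧ c ≠ 0 ∧ wt c = m}

/-- `d_X = cssDist H_X H_Z` and `d_Z = cssDist H_Z H_X`. -/
noncomputable def cssDist {ρ σ ι : Type*} [Fintype ι] [Fintype ρ] (HX : Matrix ρ ι (ZMod 2))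
    (HZ : Matrix σ ι (ZMod 2)) : ℕ :=
  sInf {m | ∃ v, HZ *ᵥ v = 0 ∧ v ∉ LinearMap.range HX.vecMulLinear ∧ wt v = m}

section MinDist

variable {ρ ι : Type*} [Fintype ι] {H : Matrix ρ ι (ZMod 2)}

theorem minDist_le {c : ι → ZMod 2} (hc : H *ᵥ c = 0) (hc₀ : c ≠ 0) : minDist H ≤ wt c :=
  Nat.sInf_le ⟨c, hc, hc₀, rfl⟩

theorem exists_wt_eq_minDist (h : ∃ c, H *ᵥ c = 0 ∧ c ≠ 0) :
    ∃ c, H *ᵥ c = 0 ∧ c ≠ 0 ∧ wt c = minDist H :=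
  let ⟨c, hc, hc₀⟩ := h
  Nat.sInf_mem (s := {m | ∃ c, H *ᵥ c = 0 ∧ c ≠ 0 ∧ wt c = m}) ⟨_, c, hc, hc₀, rfl⟩

theorem exists_mulVec_eq_zero_of_minDist_ne_zero (h : minDist H ≠ 0) :
    ∃ c, H *ᵥ c = 0 ∧ c ≠ 0 := by
  by_contra hker
  refine h (Nat.sInf_eq_zero.2 (.inr (Set.eq_empty_of_forall_notMem ?_)))
  rintro m ⟨c, hc, hc₀, -⟩
  exact hker ⟨c, hc, hc₀⟩

theorem minDist_one_kronecker {μ : Type*} [Fintype μ] [DecidableEq μ] [Nonempty μ]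
    (hker : ∃ c, H *ᵥ c = 0 ∧ c ≠ 0) :
    minDist (1 ⊗ₖ H : Matrix (μ × ρ) (μ × ι) (ZMod 2)) = minDist H := by
  obtain ⟨c, hc, hc₀, hwt⟩ := exists_wt_eq_minDist hker
  obtain ⟨r⟩ := ‹Nonempty μ›
  have hwt' : wt (vec (vecMulVec c (Pi.single r 1))) = minDist H := by
    rw [wt_vec_vecMulVec, wt_single, one_mul, hwt]
  refine IsLeast.csInf_eq ⟨⟨vec (vecMulVec c (Pi.single r 1)), ?_, ?_, hwt'⟩, ?_⟩
  · rw [kronecker_mulVec_vec, mul_vecMulVec, hc, zero_vecMulVec, Matrix.zero_mul, vec_zero]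
  · rwa [Ne, ← wt_eq_zero_iff, hwt', ← hwt, wt_eq_zero_iff]
  · rintro m ⟨v, hv, hv₀, rfl⟩
    obtain ⟨X, rfl⟩ := vec_bijective.2 v
    rw [kronecker_mulVec_vec, transpose_one, Matrix.mul_one, vec_eq_zero_iff] at hv
    obtain ⟨⟨r, i⟩, hri⟩ := Function.ne_iff.1 hv₀
    calc minDist H ≤ wt (vec X ∘ Prod.mk r) :=
          minDist_le (funext fun i => congrFun₂ hv i r) (Function.ne_iff.2 ⟨i, hri⟩)
      _ ≤ wt (vec X) := wt_comp_le (Prod.mk_right_injective r) _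

end MinDist

section HypergraphProduct

variable {R₁ N₁ R₂ N₂ : Type*}

theorem exists_eq_sumElim_vec (v : (N₁ × N₂) ⊕ (R₁ × R₂) → ZMod 2) :
    ∃ (X₁ : Matrix N₂ N₁ (ZMod 2)) (X₂ : Matrix R₂ R₁ (ZMod 2)),
      v = Sum.elim (vec X₁) (vec X₂) := by
  obtain ⟨X₁, hX₁⟩ := vec_bijective.2 (v ∘ Sum.inl)
  obtain ⟨X₂, hX₂⟩ := vec_bijective.2 (v ∘ Sum.inr)
  exact ⟨X₁, X₂, by rw [hX₁, hX₂, Sum.elim_comp_inl_inr]⟩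

theorem vec_vecMul_hgpX [Fintype R₁] [Fintype N₂] [DecidableEq R₁] [DecidableEq N₂]
    (H₁ : Matrix R₁ N₁ (ZMod 2)) (H₂ : Matrix R₂ N₂ (ZMod 2)) (U : Matrix N₂ R₁ (ZMod 2)) :
    vec U ᵥ* hgpX H₁ H₂ = Sum.elim (vec (U * H₁)) (vec (H₂ * U)) := by
  rw [hgpX, vecMul_fromCols, vec_vecMul_kronecker, vec_vecMul_kronecker, transpose_one,
    transpose_transpose, Matrix.mul_one, Matrix.one_mul]

theorem vec_vecMul_hgpZ [Fintype N₁] [Fintype R₂] [DecidableEq N₁] [DecidableEq R₂]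
    (H₁ : Matrix R₁ N₁ (ZMod 2)) (H₂ : Matrix R₂ N₂ (ZMod 2)) (U : Matrix R₂ N₁ (ZMod 2)) :
    vec U ᵥ* hgpZ H₁ H₂ = Sum.elim (vec (H₂ᵀ * U)) (vec (U * H₁ᵀ)) := by
  rw [hgpZ, vecMul_fromCols, vec_vecMul_kronecker, vec_vecMul_kronecker, transpose_one,
    Matrix.mul_one, Matrix.one_mul]

variable [Fintype R₁] [Fintype N₁] [Fintype R₂] [Fintype N₂]

theorem hgpZ_mulVec_sumElim_vec [DecidableEq N₁] [DecidableEq R₂]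
    (H₁ : Matrix R₁ N₁ (ZMod 2)) (H₂ : Matrix R₂ N₂ (ZMod 2))
    (X₁ : Matrix N₂ N₁ (ZMod 2)) (X₂ : Matrix R₂ R₁ (ZMod 2)) :
    hgpZ H₁ H₂ *ᵥ Sum.elim (vec X₁) (vec X₂) = vec (H₂ * X₁ + X₂ * H₁) := by
  rw [hgpZ, fromCols_mulVec_sumElim, kronecker_mulVec_vec, kronecker_mulVec_vec, vec_add,
    transpose_one, transpose_transpose, Matrix.mul_one, Matrix.one_mul]

theorem hgpX_mulVec_sumElim_vec [DecidableEq R₁] [DecidableEq N₂]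
    (H₁ : Matrix R₁ N₁ (ZMod 2)) (H₂ : Matrix R₂ N₂ (ZMod 2))
    (X₁ : Matrix N₂ N₁ (ZMod 2)) (X₂ : Matrix R₂ R₁ (ZMod 2)) :
    hgpX H₁ H₂ *ᵥ Sum.elim (vec X₁) (vec X₂) = vec (X₁ * H₁ᵀ + H₂ᵀ * X₂) := by
  rw [hgpX, fromCols_mulVec_sumElim, kronecker_mulVec_vec, kronecker_mulVec_vec, vec_add,
    transpose_one, Matrix.mul_one, Matrix.one_mul]

theorem hgpZ_mulVec_sumElim_vec_vecMulVec [DecidableEq N₁] [DecidableEq R₂]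
    {H₁ : Matrix R₁ N₁ (ZMod 2)} {H₂ : Matrix R₂ N₂ (ZMod 2)} {c₂ : N₂ → ZMod 2}
    (hc₂ : H₂ *ᵥ c₂ = 0) (a : N₁ → ZMod 2) :
    hgpZ H₁ H₂ *ᵥ Sum.elim (vec (vecMulVec c₂ a)) 0 = 0 := by
  rw [← vec_zero (m := R₂) (n := R₁), hgpZ_mulVec_sumElim_vec, mul_vecMulVec, hc₂,
    zero_vecMulVec, Matrix.zero_mul, add_zero, vec_zero]

theorem hgpX_mulVec_sumElim_vec_vecMulVec [DecidableEq R₁] [DecidableEq N₂]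
    {H₁ : Matrix R₁ N₁ (ZMod 2)} {H₂ : Matrix R₂ N₂ (ZMod 2)} {c₁ : N₁ → ZMod 2}
    (hc₁ : H₁ *ᵥ c₁ = 0) (b : N₂ → ZMod 2) :
    hgpX H₁ H₂ *ᵥ Sum.elim (vec (vecMulVec b c₁)) 0 = 0 := by
  rw [← vec_zero (m := R₂) (n := R₁), hgpX_mulVec_sumElim_vec, vecMulVec_mul, vecMul_transpose,
    hc₁, Matrix.mul_zero, add_zero]
  exact funext fun _ => mul_zero _

theorem sumElim_vec_vecMulVec_single_dotProduct [DecidableEq N₁] [DecidableEq N₂]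
    (c₁ : N₁ → ZMod 2) (c₂ : N₂ → ZMod 2) (n₁ : N₁) (n₂ : N₂) :
    Sum.elim (vec (vecMulVec c₂ (Pi.single n₁ 1))) (0 : R₁ × R₂ → ZMod 2) ⬝ᵥ
      Sum.elim (vec (vecMulVec (Pi.single n₂ 1) c₁)) 0 = c₂ n₂ * c₁ n₁ := by
  rw [sumElim_dotProduct_sumElim, vec_vecMulVec_dotProduct_vec_vecMulVec, dotProduct_zero,
    add_zero, dotProduct_single_one, single_one_dotProduct]

variable [DecidableEq R₁] [DecidableEq N₁] [DecidableEq R₂] [DecidableEq N₂]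
  {H₁ : Matrix R₁ N₁ (ZMod 2)} {H₂ : Matrix R₂ N₂ (ZMod 2)}

theorem minDist_le_wt_of_hgpZ_mulVec_eq_zero (hH₁ : Function.Injective H₁.vecMul)
    {v : (N₁ × N₂) ⊕ (R₁ × R₂) → ZMod 2} (hv : hgpZ H₁ H₂ *ᵥ v = 0)
    (hnr : v ∉ LinearMap.range (hgpX H₁ H₂).vecMulLinear) : minDist H₂ ≤ wt v := by
  obtain ⟨X₁, X₂, rfl⟩ := exists_eq_sumElim_vec v
  rw [hgpZ_mulVec_sumElim_vec, vec_eq_zero_iff] at hv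
  have hcyc := eq_of_add_eq_zero_of_charTwo hv
  rcases exists_eq_mul_or_exists_mulVec_ne_zero hH₁ hcyc with ⟨U, rfl, rfl⟩ | ⟨c, hc, hXc⟩
  · exact absurd ⟨vec U, vec_vecMul_hgpX H₁ H₂ U⟩ hnr
  · have hXc_ker : H₂ *ᵥ (X₁ *ᵥ c) = 0 := by
      rw [mulVec_mulVec, hcyc, ← mulVec_mulVec, hc, mulVec_zero]
    calc minDist H₂ ≤ wt (X₁ *ᵥ c) := minDist_le hXc_ker hXc
      _ ≤ wt (vec X₁) := wt_mulVec_le_wt_vec X₁ c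
      _ ≤ wt (Sum.elim (vec X₁) (vec X₂)) := wt_sumElim (vec X₁) (vec X₂) ▸ Nat.le_add_right _ _

theorem minDist_le_wt_of_hgpX_mulVec_eq_zero (hH₂ : Function.Injective H₂.vecMul)
    {v : (N₁ × N₂) ⊕ (R₁ × R₂) → ZMod 2} (hv : hgpX H₁ H₂ *ᵥ v = 0)
    (hnr : v ∉ LinearMap.range (hgpZ H₁ H₂).vecMulLinear) : minDist H₁ ≤ wt v := by
  obtain ⟨X₁, X₂, rfl⟩ := exists_eq_sumElim_vec v
  rw [hgpX_mulVec_sumElim_vec, vec_eq_zero_iff] at hv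
  have hcyc : H₁ * X₁ᵀ = X₂ᵀ * H₂ := by
    rw [← transpose_transpose (H₁ * X₁ᵀ), transpose_mul, transpose_transpose,
      eq_of_add_eq_zero_of_charTwo hv, transpose_mul, transpose_transpose]
  rcases exists_eq_mul_or_exists_mulVec_ne_zero hH₂ hcyc with ⟨U, hU₁, hU₂⟩ | ⟨c, hc, hXc⟩
  · refine absurd ⟨vec Uᵀ, ?_⟩ hnr
    rw [vecMulLinear_apply, vec_vecMul_hgpZ, ← transpose_mul, ← transpose_mul, ← hU₁, ← hU₂,
      transpose_transpose, transpose_transpose]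
  · have hXc_ker : H₁ *ᵥ (X₁ᵀ *ᵥ c) = 0 := by
      rw [mulVec_mulVec, hcyc, ← mulVec_mulVec, hc, mulVec_zero]
    calc minDist H₁ ≤ wt (X₁ᵀ *ᵥ c) := minDist_le hXc_ker hXc
      _ ≤ wt (vec X₁ᵀ) := wt_mulVec_le_wt_vec X₁ᵀ c
      _ ≤ wt (vec X₁) := wt_comp_le Prod.swap_injective (vec X₁)
      _ ≤ wt (Sum.elim (vec X₁) (vec X₂)) := wt_sumElim (vec X₁) (vec X₂) ▸ Nat.le_add_right _ _

theorem cssDist_hgpX_hgpZ (hH₁ : Function.Injective H₁.vecMul)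
    (hker₁ : ∃ c, H₁ *ᵥ c = 0 ∧ c ≠ 0) (hker₂ : ∃ c, H₂ *ᵥ c = 0 ∧ c ≠ 0) :
    cssDist (hgpX H₁ H₂) (hgpZ H₁ H₂) = minDist H₂ := by
  obtain ⟨c₁, hc₁, hc₁₀⟩ := hker₁
  obtain ⟨c₂, hc₂, hc₂₀, hwt⟩ := exists_wt_eq_minDist hker₂
  obtain ⟨n₁, hn₁⟩ := Function.ne_iff.1 hc₁₀
  obtain ⟨n₂, hn₂⟩ := Function.ne_iff.1 hc₂₀
  refine IsLeast.csInf_eq ⟨⟨_, hgpZ_mulVec_sumElim_vec_vecMulVec hc₂ (Pi.single n₁ 1),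
    notMem_range_vecMulLinear_of_dotProduct_ne_zero
      (hgpX_mulVec_sumElim_vec_vecMulVec hc₁ (Pi.single n₂ 1)) ?_, ?_⟩, ?_⟩
  · rw [sumElim_vec_vecMulVec_single_dotProduct]
    exact mul_ne_zero hn₂ hn₁
  · rw [wt_sumElim, wt_zero, add_zero, wt_vec_vecMulVec, wt_single, one_mul, hwt]
  · rintro m ⟨v, hv, hnr, rfl⟩
    exact minDist_le_wt_of_hgpZ_mulVec_eq_zero hH₁ hv hnr

theorem cssDist_hgpZ_hgpX (hH₂ : Function.Injective H₂.vecMul)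
    (hker₁ : ∃ c, H₁ *ᵥ c = 0 ∧ c ≠ 0) (hker₂ : ∃ c, H₂ *ᵥ c = 0 ∧ c ≠ 0) :
    cssDist (hgpZ H₁ H₂) (hgpX H₁ H₂) = minDist H₁ := by
  obtain ⟨c₁, hc₁, hc₁₀, hwt⟩ := exists_wt_eq_minDist hker₁
  obtain ⟨c₂, hc₂, hc₂₀⟩ := hker₂
  obtain ⟨n₁, hn₁⟩ := Function.ne_iff.1 hc₁₀
  obtain ⟨n₂, hn₂⟩ := Function.ne_iff.1 hc₂₀
  refine IsLeast.csInf_eq ⟨⟨_, hgpX_mulVec_sumElim_vec_vecMulVec hc₁ (Pi.single n₂ 1),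
    notMem_range_vecMulLinear_of_dotProduct_ne_zero
      (hgpZ_mulVec_sumElim_vec_vecMulVec hc₂ (Pi.single n₁ 1)) ?_, ?_⟩, ?_⟩
  · rw [dotProduct_comm, sumElim_vec_vecMulVec_single_dotProduct]
    exact mul_ne_zero hn₂ hn₁
  · rw [wt_sumElim, wt_zero, add_zero, wt_vec_vecMulVec, wt_single, mul_one, hwt]
  · rintro m ⟨v, hv, hnr, rfl⟩
    exact minDist_le_wt_of_hgpX_mulVec_eq_zero hH₂ hv hnr

end HypergraphProduct

section Repetition

variable {n : ℕ}

theorem repMat_mulVec_apply (c : Fin n → ZMod 2) (i : Fin (n - 1)) :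
    (repMat n *ᵥ c) i = c ⟨i, by omega⟩ + c ⟨i + 1, by omega⟩ := by
  rw [mulVec, dotProduct, Fintype.sum_eq_add (⟨i, by omega⟩ : Fin n) ⟨i + 1, by omega⟩
    (by simp [Fin.ext_iff])]
  · simp [repMat]
  · intro j hj
    simp [repMat, Fin.ext_iff] at hj ⊢
    omega

theorem repMat_mulVec_eq_zero_iff {c : Fin n → ZMod 2} :
    repMat n *ᵥ c = 0 ↔ ∀ i j, c i = c j := by
  refine ⟨fun h => ?_, fun h => funext fun i => ?_⟩
  · have step (k : ℕ) (hk : k + 1 < n) : c ⟨k, by omega⟩ = c ⟨k + 1, hk⟩ :=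
      CharTwo.add_eq_zero.1 (by simpa [repMat_mulVec_apply] using congrFun h ⟨k, by omega⟩)
    have base (k : ℕ) (hk : k < n) : c ⟨k, hk⟩ = c ⟨0, by omega⟩ := by
      induction k with
      | zero => rfl
      | succ k ih => rw [← step k hk, ih]
    exact fun i j => (base i i.2).trans (base j j.2).symm
  · rw [repMat_mulVec_apply, h ⟨i, by omega⟩ ⟨i + 1, by omega⟩, CharTwo.add_self_eq_zero,
      Pi.zero_apply]

theorem repMat_mulVec_indicator_le (k : Fin (n - 1)) :
    repMat n *ᵥ (fun j => if (j : ℕ) ≤ k then 1 else 0) = Pi.single k 1 := by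
  funext i
  simp only [repMat_mulVec_apply, Pi.single_apply, Fin.ext_iff]
  split_ifs <;> first | omega | decide

theorem vecMul_repMat_injective : Function.Injective (repMat n).vecMul := by
  intro y₁ y₂ h
  funext k
  simpa [← dotProduct_mulVec, repMat_mulVec_indicator_le] using
    congrArg (· ⬝ᵥ fun j : Fin n => if (j : ℕ) ≤ k then (1 : ZMod 2) else 0) h

theorem minDist_repMat (hn : 1 ≤ n) : minDist (repMat n) = n := by
  refine IsLeast.csInf_eq ⟨⟨1, repMat_mulVec_eq_zero_iff.2 fun _ _ => rfl,
    Function.ne_iff.2 ⟨⟨0, hn⟩, one_ne_zero⟩, ?_⟩, ?_⟩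
  · exact (wt_eq_card (v := 1) fun _ => one_ne_zero).trans (Fintype.card_fin n)
  · rintro m ⟨c, hc, hc₀, rfl⟩
    obtain ⟨i, hi⟩ := Function.ne_iff.1 hc₀
    rw [wt_eq_card fun j => repMat_mulVec_eq_zero_iff.1 hc j i ▸ hi, Fintype.card_fin]

end Repetition

theorem vecMul_abMat_injective (w h : ℕ) : Function.Injective (abMat w h).vecMul := by
  rw [abMat_eq_one_kronecker_repMat]
  exact one_kronecker_vecMul_injective vecMul_repMat_injective

theorem minDist_abMat {w h : ℕ} (hw : 1 ≤ w) (hh : 1 ≤ h) : minDist (abMat w h) = w := by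
  have : Nonempty (Fin h) := ⟨⟨0, hh⟩⟩
  rw [abMat_eq_one_kronecker_repMat, minDist_one_kronecker, minDist_repMat hw]
  exact exists_mulVec_eq_zero_of_minDist_ne_zero (by rw [minDist_repMat hw]; omega)

/-- The CSS code distance of the hypergraph product of the "ab"-pattern code `abMat w h`
with the repetition code `R_d` is `min(w, d)`, where
`d_X = min{ wt v : H_Z v = 0, v ∉ rowspace(H_X) }` and
`d_Z = min{ wt v : H_X v = 0, v ∉ rowspace(H_Z) }`. -/
theorem ab_rep_hgp_distance (w h d : ℕ) (hw : 2 ≤ w) (hh : 1 ≤ h) (hd : 2 ≤ d) :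
    min
      (sInf {m : ℕ | ∃ v, (hgpZ (abMat w h) (repMat d)).mulVec v = 0 ∧
        v ∉ LinearMap.range (hgpX (abMat w h) (repMat d)).vecMulLinear ∧ wt v = m})
      (sInf {m : ℕ | ∃ v, (hgpX (abMat w h) (repMat d)).mulVec v = 0 ∧
        v ∉ LinearMap.range (hgpZ (abMat w h) (repMat d)).vecMulLinear ∧ wt v = m})
    = min w d := by
  have hab : minDist (abMat w h) = w := minDist_abMat (by omega) hh
  have hrep : minDist (repMat d) = d := minDist_repMat (by omega)
  have hker₁ := exists_mulVec_eq_zero_of_minDist_ne_zero (hab ▸ (by omega : w ≠ 0))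
  have hker₂ := exists_mulVec_eq_zero_of_minDist_ne_zero (hrep ▸ (by omega : d ≠ 0))
  change min (cssDist (hgpX _ _) (hgpZ _ _)) (cssDist (hgpZ _ _) (hgpX _ _)) = _
  rw [cssDist_hgpX_hgpZ (vecMul_abMat_injective w h) hker₁ hker₂,
    cssDist_hgpZ_hgpX vecMul_repMat_injective hker₁ hker₂, hab, hrep, min_comm]
end
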